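/- arXiv:chao-dyn/9612016 — 2 statements merged into one kernel-verified Lean document; each statement's English description precedes it below -/
import Mathlib

section
/- Let γ : ℝ → ℝ² be a C², L-periodic, unit-speed curve that parametrizes, with positive orientation, the boundary of a compact convex body K ⊂ ℝ², and suppose its curvature κ(s) = det(γ'(s), γ''(s)) satisfies κ(s) ≥ 1/ρ_max > 0 for all s. Then for every s, the entire curve is contained in the closed disc of radius ρ_max internally tangent at γ(s): |γ(t) − (γ(s) + ρ_max N(s))| ≤ ρ_max for all t ∈ ℝ, where N(s) = (−Y'(s), X'(s)) is the inward unit normal. -/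
/-!
Every tangent line of the curve supports `K`: a Hahn–Banach functional `f` maximised over the
curve at `γ s` has `f (γ' s) = 0` and `f (γ'' s) ≤ 0` by the first- and second-order conditions,
and since `γ'' = κ N` with `κ > 0` this makes `f` a negative multiple of `⟨·, N s⟩`.

For `μ > ρmax` put `q v = ⟨γ t - γ v, N v⟩ - |γ t - γ v|² / (2μ)`; `q v ≥ 0` says exactly that
`γ t` lies in the disc of radius `μ` internally tangent at `γ v`. As
`q' v = ⟨γ t - γ v, γ' v⟩ (1/μ - κ v)` with `1/μ - κ < 0`, at a minimum `u` of the periodic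
function `q` the chord `γ t - γ u` is normal to the curve, and the second-order condition gives
`κ u * h ≤ 1` for its height `h = ⟨γ t - γ u, N u⟩ ≥ 0`. So `h ≤ μ` and `q u = h - h² / (2μ) ≥ 0`,
hence `q ≥ 0` everywhere. Letting `μ → ρmax` gives the claim.
-/

open Set Filter Topology

theorem HasDerivAt.fst {E F : Type*} [NormedAddCommGroup E] [NormedSpace ℝ E]
    [NormedAddCommGroup F] [NormedSpace ℝ F] {f : ℝ → E × F} {f' : E × F} {x : ℝ}
    (hf : HasDerivAt f f' x) : HasDerivAt (fun y => (f y).1) f'.1 x := by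
  simpa using hf.hasFDerivAt.fst.hasDerivAt

theorem HasDerivAt.snd {E F : Type*} [NormedAddCommGroup E] [NormedSpace ℝ E]
    [NormedAddCommGroup F] [NormedSpace ℝ F] {f : ℝ → E × F} {f' : E × F} {x : ℝ}
    (hf : HasDerivAt f f' x) : HasDerivAt (fun y => (f y).2) f'.2 x := by
  simpa using hf.hasFDerivAt.snd.hasDerivAt

theorem HasDerivAt.mul_continuousAt_of_eq_zero {a b : ℝ → ℝ} {a' x : ℝ} (ha : HasDerivAt a a' x)
    (hax : a x = 0) (hb : ContinuousAt b x) : HasDerivAt (fun y => a y * b y) (a' * b x) x := by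
  rw [hasDerivAt_iff_tendsto_slope] at ha ⊢
  refine (ha.mul (hb.tendsto.mono_left nhdsWithin_le_nhds)).congr fun y => ?_
  simp only [slope_def_field, hax, zero_mul, sub_zero]
  ring

theorem IsLocalMin.nonneg_of_hasDerivAt_deriv {g g' : ℝ → ℝ} {x c : ℝ} (hmin : IsLocalMin g x)
    (hg : ∀ᶠ y in 𝓝 x, HasDerivAt g (g' y) y) (hg' : HasDerivAt g' c x) : 0 ≤ c := by
  by_contra! hc
  have hg'x : g' x = 0 := hmin.hasDerivAt_eq_zero hg.self_of_nhds
  have hneg : ∀ᶠ y in 𝓝[>] x, g' y < 0 := by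
    have hslope := (hasDerivAt_iff_tendsto_slope.mp hg').mono_left (nhdsGT_le_nhdsNE x)
    filter_upwards [hslope (Iio_mem_nhds hc), self_mem_nhdsWithin] with y hy hxy
    rw [mem_preimage, slope_def_field, hg'x, sub_zero, mem_Iio] at hy
    exact ((div_neg_iff.mp hy).resolve_left fun h => h.2.not_gt (sub_pos.mpr hxy)).1
  obtain ⟨u, hxu : x < u, hu⟩ := mem_nhdsGT_iff_exists_Ioo_subset.mp
    ((hneg.and (nhdsWithin_le_nhds hg)).and (nhdsWithin_le_nhds hmin))
  obtain ⟨y, hxy, hyu⟩ := exists_between hxu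
  have hcont : ContinuousOn g (Icc x y) := by
    intro z hz
    rcases hz.1.eq_or_lt with rfl | hxz
    · exact hg.self_of_nhds.continuousAt.continuousWithinAt
    · exact (hu ⟨hxz, hz.2.trans_lt hyu⟩).1.2.continuousAt.continuousWithinAt
  obtain ⟨ξ, hξ, hξ_slope⟩ := exists_hasDerivAt_eq_slope g g' hxy hcont fun z hz =>
    (hu ⟨hz.1, hz.2.trans hyu⟩).1.2
  have hξ_neg : g' ξ < 0 := (hu ⟨hξ.1, hξ.2.trans hyu⟩).1.1
  have hmin_y : g x ≤ g y := (hu ⟨hxy, hyu⟩).2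
  rw [hξ_slope, div_lt_iff₀ (sub_pos.mpr hxy)] at hξ_neg
  linarith

theorem Function.Periodic.exists_forall_le_of_continuous {α : Type*} [LinearOrder α]
    [TopologicalSpace α] [ClosedIicTopology α] {f : ℝ → α} {c : ℝ} (hp : Function.Periodic f c)
    (hc : c ≠ 0) (hf : Continuous f) : ∃ a, ∀ y, f a ≤ f y := by
  obtain ⟨_, ⟨a, rfl⟩, ha⟩ := (hp.compact_of_continuous hc hf).exists_isLeast (range_nonempty f)
  exact ⟨a, fun y => ha ⟨y, rfl⟩⟩

theorem Function.Periodic.hasDerivAt_periodic {E : Type*} [NormedAddCommGroup E]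
    [NormedSpace ℝ E] {f f' : ℝ → E} {L : ℝ} (hper : Function.Periodic f L)
    (hf : ∀ u, HasDerivAt f (f' u) u) : Function.Periodic f' L := by
  intro u
  have hshift : HasDerivAt (fun v => f (v + L)) (f' (u + L)) u := by
    simpa using (hf (u + L)).comp_add_const u L
  rw [show (fun v => f (v + L)) = f from funext hper] at hshift
  exact hshift.unique (hf u)

namespace PlaneCurve

def dot (v w : ℝ × ℝ) : ℝ := v.1 * w.1 + v.2 * w.2

/-- For a curve `γ`, `rot (γ' s)` is the inward normal `N(s)` and `dot (γ'' s) (rot (γ' s))` is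
the curvature `κ(s)`. -/
def rot (v : ℝ × ℝ) : ℝ × ℝ := (-v.2, v.1)

theorem dot_smul_right (c : ℝ) (v w : ℝ × ℝ) : dot v (c • w) = c * dot v w := by
  simp only [dot, Prod.smul_fst, Prod.smul_snd, smul_eq_mul]
  ring

theorem rot_smul (c : ℝ) (v : ℝ × ℝ) : rot (c • v) = c • rot v := by
  ext <;> simp [rot]

theorem rot_rot (v : ℝ × ℝ) : rot (rot v) = -v := by
  ext <;> simp [rot]

theorem eq_dot_smul_add_dot_rot_smul {T : ℝ × ℝ} (hT : dot T T = 1) (x : ℝ × ℝ) :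
    x = dot x T • T + dot x (rot T) • rot T := by
  unfold dot rot at *
  ext
  · simp only [Prod.smul_fst, Prod.fst_add, smul_eq_mul]
    linear_combination (-x.1) * hT
  · simp only [Prod.smul_snd, Prod.snd_add, smul_eq_mul]
    linear_combination (-x.2) * hT

theorem eq_dot_rot_smul_rot_of_dot_eq_zero {T A : ℝ × ℝ} (hT : dot T T = 1) (hA : dot A T = 0) :
    A = dot A (rot T) • rot T := by
  simpa [hA] using eq_dot_smul_add_dot_rot_smul hT A

theorem dot_self_eq_sq_add_sq {T : ℝ × ℝ} (hT : dot T T = 1) (x : ℝ × ℝ) :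
    dot x x = dot x T ^ 2 + dot x (rot T) ^ 2 := by
  unfold dot rot at *
  linear_combination (-(x.1 ^ 2 + x.2 ^ 2)) * hT

theorem _root_.HasDerivAt.dot {f g : ℝ → ℝ × ℝ} {f' g' : ℝ × ℝ} {x : ℝ}
    (hf : HasDerivAt f f' x) (hg : HasDerivAt g g' x) :
    HasDerivAt (fun y => dot (f y) (g y)) (dot f' (g x) + dot (f x) g') x := by
  refine ((hf.fst.mul hg.fst).add (hf.snd.mul hg.snd)).congr_deriv ?_
  simp only [PlaneCurve.dot]
  ring

theorem _root_.HasDerivAt.rot {f : ℝ → ℝ × ℝ} {f' : ℝ × ℝ} {x : ℝ} (hf : HasDerivAt f f' x) :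
    HasDerivAt (fun y => rot (f y)) (rot f') x :=
  hf.snd.neg.prodMk hf.fst

theorem dot_eq_zero_of_hasDerivAt_of_dot_self_eq_one {T : ℝ → ℝ × ℝ} {A : ℝ × ℝ} {u : ℝ}
    (hT : HasDerivAt T A u) (hunit : ∀ v, dot (T v) (T v) = 1) : dot A (T u) = 0 := by
  have h := hT.dot hT
  rw [show (fun v => dot (T v) (T v)) = fun _ => 1 from funext hunit] at h
  have h0 := h.unique (hasDerivAt_const u 1)
  simp only [dot] at h0 ⊢
  linarith

variable {γ γ' γ'' : ℝ → ℝ × ℝ}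

theorem eq_curvature_smul_rot {u : ℝ} (hγ' : HasDerivAt γ' (γ'' u) u)
    (hunit : ∀ v, dot (γ' v) (γ' v) = 1) :
    γ'' u = dot (γ'' u) (rot (γ' u)) • rot (γ' u) :=
  eq_dot_rot_smul_rot_of_dot_eq_zero (hunit u)
    (dot_eq_zero_of_hasDerivAt_of_dot_self_eq_one hγ' hunit)

theorem dot_rot_nonneg_of_forall_le {f : StrongDual ℝ (ℝ × ℝ)} (hf : f ≠ 0) {p : ℝ}
    (hγ : ∀ u, HasDerivAt γ (γ' u) u) (hγ' : HasDerivAt γ' (γ'' p) p)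
    (hunit : ∀ u, dot (γ' u) (γ' u) = 1) (hκ : 0 < dot (γ'' p) (rot (γ' p)))
    (hmax : ∀ u, f (γ u) ≤ f (γ p)) {x : ℝ × ℝ} (hx : f x ≤ f (γ p)) :
    0 ≤ dot (x - γ p) (rot (γ' p)) := by
  have hmin : IsLocalMin (fun u => -f (γ u)) p :=
    Eventually.of_forall fun u => neg_le_neg (hmax u)
  have hderiv : ∀ u, HasDerivAt (fun u => -f (γ u)) (-f (γ' u)) u := fun u =>
    (f.hasFDerivAt.comp_hasDerivAt u (hγ u)).neg
  have hfT : f (γ' p) = 0 := neg_eq_zero.mp (hmin.hasDerivAt_eq_zero (hderiv p))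
  have hfA : 0 ≤ -f (γ'' p) := hmin.nonneg_of_hasDerivAt_deriv (Eventually.of_forall hderiv)
    (f.hasFDerivAt.comp_hasDerivAt p hγ').neg
  have hrep : ∀ y, f y = dot y (rot (γ' p)) * f (rot (γ' p)) := fun y => by
    conv_lhs => rw [eq_dot_smul_add_dot_rot_smul (hunit p) y]
    simp [hfT]
  have hfN : f (rot (γ' p)) < 0 := by
    refine lt_of_le_of_ne ?_ fun hzero =>
      hf (ContinuousLinearMap.ext fun y => by simp [hrep y, hzero])
    rw [hrep] at hfA
    nlinarith
  refine nonneg_of_mul_nonpos_left ?_ hfN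
  rw [← hrep, map_sub]
  linarith

theorem dot_rot_nonneg_of_mem_frontier {K : Set (ℝ × ℝ)} (hK : Convex ℝ K)
    (hK_int : (interior K).Nonempty) (hγK : ∀ u, γ u ∈ frontier K)
    (hγ : ∀ u, HasDerivAt γ (γ' u) u) (hγ' : ∀ u, HasDerivAt γ' (γ'' u) u)
    (hunit : ∀ u, dot (γ' u) (γ' u) = 1) (hκ : ∀ u, 0 < dot (γ'' u) (rot (γ' u))) (s t : ℝ) :
    0 ≤ dot (γ t - γ s) (rot (γ' s)) := by
  obtain ⟨f, hf, hmaxK⟩ := geometric_hahn_banach_of_nonempty_interior_point hK (hγK s).2 hK_int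
  have hmax : ∀ y ∈ closure K, f y ≤ f (γ s) :=
    closure_minimal hmaxK (isClosed_le f.continuous continuous_const)
  exact dot_rot_nonneg_of_forall_le hf hγ (hγ' s) hunit (hκ s) (fun u => hmax _ (hγK u).1)
    (hmax _ (hγK t).1)

/-- `0 ≤ tangentDiscMargin γ γ' μ x v` says that `x` lies in the closed disc of radius `μ`
internally tangent to the curve at `γ v`. -/
noncomputable def tangentDiscMargin (γ γ' : ℝ → ℝ × ℝ) (μ : ℝ) (x : ℝ × ℝ) (v : ℝ) : ℝ :=
  dot (x - γ v) (rot (γ' v)) - dot (x - γ v) (x - γ v) / (2 * μ)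

theorem tangentDiscMargin_nonneg_iff {μ : ℝ} (hμ : 0 < μ) (x : ℝ × ℝ) (v : ℝ) :
    0 ≤ tangentDiscMargin γ γ' μ x v ↔
      dot (x - γ v) (x - γ v) ≤ 2 * μ * dot (x - γ v) (rot (γ' v)) := by
  rw [tangentDiscMargin, sub_nonneg, div_le_iff₀ (by positivity), mul_comm]

theorem hasDerivAt_tangentDiscMargin {μ : ℝ} (hμ : μ ≠ 0) (x : ℝ × ℝ) {v : ℝ}
    (hγ : HasDerivAt γ (γ' v) v) (hγ' : HasDerivAt γ' (γ'' v) v)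
    (hunit : ∀ u, dot (γ' u) (γ' u) = 1) :
    HasDerivAt (tangentDiscMargin γ γ' μ x)
      (dot (x - γ v) (γ' v) * (1 / μ - dot (γ'' v) (rot (γ' v)))) v := by
  have hX := hγ.const_sub x
  refine ((hX.dot hγ'.rot).sub ((hX.dot hX).div_const _)).congr_deriv ?_
  rw [congrArg rot (eq_curvature_smul_rot hγ' hunit), rot_smul, rot_rot]
  simp only [dot, rot, Prod.smul_fst, Prod.smul_snd, Prod.fst_neg, Prod.snd_neg, smul_eq_mul]
  field_simp
  ring

theorem tangentDiscMargin_nonneg_of_isLocalMin {μ : ℝ} (hμ : 0 < μ) {x : ℝ × ℝ} {u : ℝ}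
    (hγ : ∀ v, HasDerivAt γ (γ' v) v) (hγ' : ∀ v, HasDerivAt γ' (γ'' v) v)
    (hγ'' : ContinuousAt γ'' u) (hunit : ∀ v, dot (γ' v) (γ' v) = 1)
    (hx : 0 ≤ dot (x - γ u) (rot (γ' u))) (hκ : 1 / μ < dot (γ'' u) (rot (γ' u)))
    (hmin : IsLocalMin (tangentDiscMargin γ γ' μ x) u) :
    0 ≤ tangentDiscMargin γ γ' μ x u := by
  set κ : ℝ → ℝ := fun v => dot (γ'' v) (rot (γ' v))
  set h := dot (x - γ u) (rot (γ' u))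
  have hq : ∀ v, HasDerivAt (tangentDiscMargin γ γ' μ x)
      (dot (x - γ v) (γ' v) * (1 / μ - κ v)) v := fun v =>
    hasDerivAt_tangentDiscMargin hμ.ne' x (hγ v) (hγ' v) hunit
  have hb : 1 / μ - κ u < 0 := sub_neg.2 hκ
  have hXT : dot (x - γ u) (γ' u) = 0 :=
    (mul_eq_zero.mp (hmin.hasDerivAt_eq_zero (hq u))).resolve_right hb.ne
  have hchord : HasDerivAt (fun v => dot (x - γ v) (γ' v)) (dot (x - γ u) (γ'' u) - 1) u := by
    refine (((hγ u).const_sub x).dot (hγ' u)).congr_deriv ?_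
    simp only [dot, Prod.fst_neg, Prod.snd_neg] at hunit ⊢
    linear_combination -(hunit u)
  have hb_cont : ContinuousAt (fun v => 1 / μ - κ v) u := by
    have hγ'_cont : ContinuousAt γ' u := (hγ' u).continuousAt
    simp only [κ, dot, rot]
    fun_prop
  have hXA : dot (x - γ u) (γ'' u) ≤ 1 := by
    have := hmin.nonneg_of_hasDerivAt_deriv (Eventually.of_forall hq)
      (hchord.mul_continuousAt_of_eq_zero hXT hb_cont)
    nlinarith
  have hκh : κ u * h ≤ 1 := by
    rwa [eq_curvature_smul_rot (hγ' u) hunit, dot_smul_right] at hXA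
  have hh_le : h ≤ μ := by
    have : 1 / μ * h ≤ 1 := (mul_le_mul_of_nonneg_right hκ.le hx).trans hκh
    rwa [one_div, inv_mul_le_iff₀ hμ, mul_one] at this
  rw [tangentDiscMargin_nonneg_iff hμ, dot_self_eq_sq_add_sq (hunit u), hXT]
  nlinarith

theorem tangentDiscMargin_nonneg {L μ : ℝ} (hL : L ≠ 0) (hμ : 0 < μ)
    (hγ : ∀ u, HasDerivAt γ (γ' u) u) (hγ' : ∀ u, HasDerivAt γ' (γ'' u) u)
    (hγ'' : Continuous γ'') (hper : Function.Periodic γ L)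
    (hunit : ∀ u, dot (γ' u) (γ' u) = 1) (hsupp : ∀ s t, 0 ≤ dot (γ t - γ s) (rot (γ' s)))
    (hκ : ∀ u, 1 / μ < dot (γ'' u) (rot (γ' u))) (s t : ℝ) :
    0 ≤ tangentDiscMargin γ γ' μ (γ t) s := by
  have hper_margin : Function.Periodic (tangentDiscMargin γ γ' μ (γ t)) L := fun v => by
    simp only [tangentDiscMargin, hper v, hper.hasDerivAt_periodic hγ v]
  obtain ⟨u, hu⟩ := hper_margin.exists_forall_le_of_continuous hL
    (continuous_iff_continuousAt.2 fun v =>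
      (hasDerivAt_tangentDiscMargin hμ.ne' (γ t) (hγ v) (hγ' v) hunit).continuousAt)
  exact (tangentDiscMargin_nonneg_of_isLocalMin hμ hγ hγ' hγ''.continuousAt hunit (hsupp u t)
    (hκ u) (Eventually.of_forall hu)).trans (hu s)

theorem dot_self_le_two_mul_dot_rot {L ρ : ℝ} (hL : L ≠ 0) (hρ : 0 < ρ)
    (hγ : ∀ u, HasDerivAt γ (γ' u) u) (hγ' : ∀ u, HasDerivAt γ' (γ'' u) u)
    (hγ'' : Continuous γ'') (hper : Function.Periodic γ L)
    (hunit : ∀ u, dot (γ' u) (γ' u) = 1) (hsupp : ∀ s t, 0 ≤ dot (γ t - γ s) (rot (γ' s)))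
    (hκ : ∀ u, 1 / ρ ≤ dot (γ'' u) (rot (γ' u))) (s t : ℝ) :
    dot (γ t - γ s) (γ t - γ s) ≤ 2 * ρ * dot (γ t - γ s) (rot (γ' s)) := by
  set B := dot (γ t - γ s) (rot (γ' s))
  have hlim : Tendsto (fun μ => 2 * μ * B) (𝓝[>] ρ) (𝓝 (2 * ρ * B)) :=
    ((continuous_const.mul continuous_id).mul continuous_const).continuousWithinAt
  refine ge_of_tendsto hlim ?_
  filter_upwards [self_mem_nhdsWithin] with μ hμ
  have hμ_pos : 0 < μ := hρ.trans hμ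
  exact (tangentDiscMargin_nonneg_iff hμ_pos _ _).1 <| tangentDiscMargin_nonneg hL hμ_pos hγ hγ'
    hγ'' hper hunit hsupp (fun u => (one_div_lt_one_div_of_lt hρ hμ).trans_le (hκ u)) s t

end PlaneCurve

theorem outer_blaschke_rolling_general
    (γ : ℝ → ℝ × ℝ) (L ρmax : ℝ) (K : Set (ℝ × ℝ))
    (hK_convex : Convex ℝ K)
    (hK_body : (interior K).Nonempty)
    (hγ_range : Set.range γ = frontier K)
    (hγ_smooth : ContDiff ℝ 2 γ)
    (hL : 0 < L) (hγ_per : Function.Periodic γ L)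
    (hγ_unit : ∀ s : ℝ, (deriv γ s).1 ^ 2 + (deriv γ s).2 ^ 2 = 1)
    (hρmax : 0 < ρmax)
    (hκ_lower : ∀ s : ℝ,
      1 / ρmax ≤ (deriv γ s).1 * (deriv (deriv γ) s).2
          - (deriv (deriv γ) s).1 * (deriv γ s).2) :
    ∀ s t : ℝ,
      ((γ t).1 - ((γ s).1 - ρmax * (deriv γ s).2)) ^ 2 +
        ((γ t).2 - ((γ s).2 + ρmax * (deriv γ s).1)) ^ 2 ≤ ρmax ^ 2 := by
  open PlaneCurve in
  have hγ : ∀ u, HasDerivAt γ (deriv γ u) u := fun u =>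
    (hγ_smooth.differentiable (by norm_num) u).hasDerivAt
  have hγ'_smooth : ContDiff ℝ 1 (deriv γ) := hγ_smooth.deriv'
  have hγ' : ∀ u, HasDerivAt (deriv γ) (deriv (deriv γ) u) u := fun u =>
    (hγ'_smooth.differentiable one_ne_zero u).hasDerivAt
  have hunit : ∀ u, dot (deriv γ u) (deriv γ u) = 1 := fun u => by
    simpa only [dot, sq] using hγ_unit u
  have hκ : ∀ u, 1 / ρmax ≤ dot (deriv (deriv γ) u) (rot (deriv γ u)) := fun u => by
    simp only [dot, rot]
    linarith [hκ_lower u]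
  have hsupp := dot_rot_nonneg_of_mem_frontier hK_convex hK_body
    (fun u => hγ_range ▸ mem_range_self u) hγ hγ' hunit
    (fun u => (one_div_pos.2 hρmax).trans_le (hκ u))
  intro s t
  have hkey := dot_self_le_two_mul_dot_rot hL.ne' hρmax hγ hγ'
    (hγ'_smooth.continuous_deriv le_rfl) hγ_per hunit hsupp hκ s t
  simp only [dot, rot, Prod.fst_sub, Prod.snd_sub] at hkey
  linear_combination hkey + ρmax ^ 2 * hγ_unit s

/-- **Outer Blaschke rolling estimate.**
Let `γ : ℝ → ℝ²` be a `C²`, `L`-periodic, unit-speed curve parametrizing (with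
positive orientation, which is forced by the positivity of the signed curvature)
the boundary of a compact convex body `K ⊂ ℝ²`, with signed curvature
`κ(s) = X'(s)Y''(s) − X''(s)Y'(s) ≥ 1/ρmax > 0`.  Then for every `s`, the whole
curve lies in the closed disc of radius `ρmax` internally tangent at `γ(s)`:
`|γ(t) − (γ(s) + ρmax • N(s))| ≤ ρmax` for all `t`, where `N(s) = (−Y'(s), X'(s))`
is the inward unit normal. -/
theorem outer_blaschke_rolling
    (γ : ℝ → ℝ × ℝ) (L ρmax : ℝ) (K : Set (ℝ × ℝ))
    (hK_compact : IsCompact K) (hK_convex : Convex ℝ K)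
    (hK_body : (interior K).Nonempty)
    (hγ_range : Set.range γ = frontier K)
    (hγ_smooth : ContDiff ℝ 2 γ)
    (hL : 0 < L) (hγ_per : Function.Periodic γ L)
    (hγ_unit : ∀ s : ℝ, (deriv γ s).1 ^ 2 + (deriv γ s).2 ^ 2 = 1)
    (hρmax : 0 < ρmax)
    (hκ_lower : ∀ s : ℝ,
      1 / ρmax ≤ (deriv γ s).1 * (deriv (deriv γ) s).2
          - (deriv (deriv γ) s).1 * (deriv γ s).2) :
    ∀ s t : ℝ,
      ((γ t).1 - ((γ s).1 - ρmax * (deriv γ s).2)) ^ 2 +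
        ((γ t).2 - ((γ s).2 + ρmax * (deriv γ s).1)) ^ 2 ≤ ρmax ^ 2 :=
  outer_blaschke_rolling_general γ L ρmax K hK_convex hK_body hγ_range hγ_smooth hL hγ_per hγ_unit
    hρmax hκ_lower
end

section
/- Let γ : ℝ → ℝ² be a C², L-periodic, unit-speed curve that parametrizes, with positive orientation, the boundary of a compact convex body K ⊂ ℝ², and suppose its curvature κ(s) = det(γ'(s), γ''(s)) satisfies 0 < κ(s) ≤ 1/ρ_min for all s. Then for every s, the curve does not enter the open disc of radius ρ_min internally tangent at γ(s): |γ(t) − (γ(s) + ρ_min N(s))| ≥ ρ_min for all t ∈ ℝ, where N(s) = (−Y'(s), X'(s)) is the inward unit normal. -/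
/-!
Write the unit tangent as `dir θ` with `θ' = κ > 0`. Convexity and the positive orientation put
`K` on the side of `rot (dir θ a)` of every tangent line. The support line at `γ s` meets `K` in
a segment of curve points whose tangents are `± dir (θ s)`; as `θ` is injective there are only
countably many, so the segment is a point and the tangent `dir (θ s)` occurs only at `γ s`.
Periodicity makes `θ` onto, so every `t` lies between parameters `a`, `b` with
`γ a = γ b = γ s` and `θ b = θ a + 2π`. On whichever of `[a, t]`, `[t, b]` the tangent turns by
at most `π`, comparing `γ` with the circle of radius `ρ` through `γ s` (whose curvature `1/ρ`
dominates `κ`) yields a unit vector `e` with `|dot (γ t - c) e| ≥ ρ`, `c` the centre of that circle.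
-/

open Real Set Filter Topology Function

noncomputable section

namespace Plane

def dot (v w : ℝ × ℝ) : ℝ := v.1 * w.1 + v.2 * w.2

-- `rot (deriv γ s)` is the inward normal `N(s)`.
def rot (v : ℝ × ℝ) : ℝ × ℝ := (-v.2, v.1)

def dir (θ : ℝ) : ℝ × ℝ := (cos θ, sin θ)

def curvature (γ : ℝ → ℝ × ℝ) (s : ℝ) : ℝ :=
  (deriv γ s).1 * (deriv (deriv γ) s).2 - (deriv (deriv γ) s).1 * (deriv γ s).2

section Algebra

variable (u v w : ℝ × ℝ) (c α β : ℝ)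

lemma dot_comm : dot v w = dot w v := by simp only [dot]; ring

lemma dot_sub_left : dot (u - v) w = dot u w - dot v w := by
  simp only [dot, Prod.fst_sub, Prod.snd_sub]; ring

lemma dot_smul_left : dot (c • v) w = c * dot v w := by
  simp only [dot, Prod.smul_fst, Prod.smul_snd, smul_eq_mul]; ring

lemma dot_smul_right : dot v (c • w) = c * dot v w := by
  rw [dot_comm, dot_smul_left, dot_comm]

lemma dot_rot_self : dot v (rot v) = 0 := by simp only [dot, rot]; ring

lemma rot_sub : rot (v - w) = rot v - rot w := by
  simp only [rot, Prod.fst_sub, Prod.snd_sub, Prod.mk_sub_mk, neg_sub']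

lemma dot_dir_self : dot (dir α) (dir α) = 1 := by
  simp only [dot, dir]; linear_combination sin_sq_add_cos_sq α

lemma dot_rot_dir_self : dot (rot (dir α)) (rot (dir α)) = 1 := by
  simp only [dot, dir, rot]; linear_combination sin_sq_add_cos_sq α

lemma dir_add_int_mul_two_pi (k : ℤ) : dir (α + k * (2 * π)) = dir α := by
  rw [dir, cos_add_int_mul_two_pi, sin_add_int_mul_two_pi, dir]

lemma dot_dir_rot_dir : dot (dir α) (rot (dir β)) = sin (α - β) := by
  simp only [dot, dir, rot, sin_sub]; ring

lemma dot_rot_dir_rot_dir : dot (rot (dir α)) (rot (dir β)) = cos (α - β) := by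
  simp only [dot, dir, rot, cos_sub]; ring

lemma isLinearMap_dot_left : IsLinearMap ℝ (fun v => dot v w) :=
  ⟨fun u v => by simp only [dot, Prod.fst_add, Prod.snd_add]; ring,
    fun c v => by simp only [dot_smul_left, smul_eq_mul]⟩

variable {u v w}

lemma eq_of_dot_self_sub_eq_zero (h : dot (v - w) (v - w) = 0) : v = w := by
  simp only [dot, Prod.fst_sub, Prod.snd_sub] at h
  ext <;> nlinarith [sq_nonneg (v.1 - w.1), sq_nonneg (v.2 - w.2)]

lemma dot_self_pos (hv : v ≠ 0) : 0 < dot v v := by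
  simp only [dot]
  rcases v with ⟨a, b⟩
  have : a ≠ 0 ∨ b ≠ 0 := by
    by_contra! h; exact hv (by simp [h.1, h.2])
  rcases this with h | h
  · have := mul_self_pos.mpr h; nlinarith [mul_self_nonneg b]
  · have := mul_self_pos.mpr h; nlinarith [mul_self_nonneg a]

lemma eq_smul_rot_of_dot_eq_zero (hw : dot w w = 1) (hv : dot v w = 0) :
    v = dot v (rot w) • rot w := by
  simp only [dot, rot] at hw hv ⊢
  ext
  · simp only [Prod.smul_fst, smul_eq_mul]; linear_combination w.1 * hv - v.1 * hw
  · simp only [Prod.smul_snd, smul_eq_mul]; linear_combination w.2 * hv - v.2 * hw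

lemma sq_dot_le_dot_self (hw : dot w w = 1) : dot v w ^ 2 ≤ dot v v := by
  have h : dot v v = dot v w ^ 2 + dot v (rot w) ^ 2 := by
    simp only [dot, rot] at hw ⊢; linear_combination (-(v.1 ^ 2 + v.2 ^ 2)) * hw
  rw [h]; nlinarith [sq_nonneg (dot v (rot w))]

lemma exists_dir_eq (hv : dot v v = 1) : ∃ θ, dir θ = v := by
  obtain ⟨θ, hθ⟩ := (Complex.norm_eq_one_iff ⟨v.1, v.2⟩).mp <| by
    simp only [dot] at hv
    rw [Complex.norm_def, Complex.normSq_mk, hv, Real.sqrt_one]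
  refine ⟨θ, Prod.ext ?_ ?_⟩
  · simpa [dir, Complex.exp_ofReal_mul_I_re] using congrArg Complex.re hθ
  · simpa [dir, Complex.exp_ofReal_mul_I_im] using congrArg Complex.im hθ

end Algebra

section Calculus

variable {f : ℝ → ℝ × ℝ} {f' : ℝ × ℝ} {θ : ℝ → ℝ} {θ' x : ℝ}

lemma hasDerivAt_dot_const (hf : HasDerivAt f f' x) (n : ℝ × ℝ) :
    HasDerivAt (fun y => dot (f y) n) (dot f' n) x :=
  ((hasFDerivAt_fst.comp_hasDerivAt x hf).mul_const n.1).add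
    ((hasFDerivAt_snd.comp_hasDerivAt x hf).mul_const n.2)

lemma hasDerivAt_dot_self (hf : HasDerivAt f f' x) :
    HasDerivAt (fun y => dot (f y) (f y)) (2 * dot (f x) f') x := by
  have h1 : HasDerivAt (fun y => (f y).1) f'.1 x := hf.fst
  have h2 : HasDerivAt (fun y => (f y).2) f'.2 x := hf.snd
  exact ((h1.mul h1).add (h2.mul h2)).congr_deriv (by simp only [dot]; ring)

lemma hasDerivAt_dir (hθ : HasDerivAt θ θ' x) :
    HasDerivAt (fun y => dir (θ y)) (θ' • rot (dir (θ x))) x :=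
  (hθ.cos.prodMk hθ.sin).congr_deriv <| by
    simp only [dir, rot, Prod.smul_mk, smul_eq_mul, Prod.mk.injEq]
    constructor <;> ring

end Calculus

section Angle

lemma dot_self_eq_of_hasDerivAt_smul_rot {w : ℝ → ℝ × ℝ} {κ : ℝ → ℝ}
    (hw : ∀ u, HasDerivAt w (κ u • rot (w u)) u) (u v : ℝ) :
    dot (w u) (w u) = dot (w v) (w v) := by
  have h : ∀ u, HasDerivAt (fun y => dot (w y) (w y)) 0 u := fun u =>
    (hasDerivAt_dot_self (hw u)).congr_deriv (by rw [dot_smul_right, dot_rot_self]; ring)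
  exact is_const_of_deriv_eq_zero (fun u => (h u).differentiableAt) (fun u => (h u).deriv) u v

theorem exists_angle_of_hasDerivAt {T : ℝ → ℝ × ℝ} {κ : ℝ → ℝ} (hκ : Continuous κ)
    (hT : ∀ u, HasDerivAt T (κ u • rot (T u)) u) (hT₀ : dot (T 0) (T 0) = 1) :
    ∃ θ : ℝ → ℝ, (∀ u, HasDerivAt θ (κ u) u) ∧ ∀ u, T u = dir (θ u) := by
  obtain ⟨A, hA⟩ := exists_dir_eq hT₀
  set θ : ℝ → ℝ := fun u => A + ∫ v in (0 : ℝ)..u, κ v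
  have hθ : ∀ u, HasDerivAt θ (κ u) u := fun u =>
    (hκ.integral_hasStrictDerivAt 0 u).hasDerivAt.const_add A
  refine ⟨θ, hθ, fun u => eq_of_dot_self_sub_eq_zero ?_⟩
  have hw : ∀ u, HasDerivAt (fun y => T y - dir (θ y)) (κ u • rot (T u - dir (θ u))) u :=
    fun u => ((hT u).sub (hasDerivAt_dir (hθ u))).congr_deriv (by rw [rot_sub, smul_sub])
  rw [dot_self_eq_of_hasDerivAt_smul_rot hw u 0]
  simp [θ, hA, dot]

variable {γ : ℝ → ℝ × ℝ}

theorem hasDerivAt_deriv_of_unit_speed (hγ : ContDiff ℝ 2 γ)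
    (hunit : ∀ s, dot (deriv γ s) (deriv γ s) = 1) (u : ℝ) :
    HasDerivAt (deriv γ) (curvature γ u • rot (deriv γ u)) u := by
  have hT : HasDerivAt (deriv γ) (deriv (deriv γ) u) u :=
    ((hγ.deriv' (n := 1)).differentiable one_ne_zero u).hasDerivAt
  have horth : dot (deriv (deriv γ) u) (deriv γ u) = 0 := by
    have h := (hasDerivAt_dot_self hT).unique <| by
      simpa only [hunit] using hasDerivAt_const u (1 : ℝ)
    rw [dot_comm]; linarith
  have hκ : curvature γ u = dot (deriv (deriv γ) u) (rot (deriv γ u)) := by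
    simp only [curvature, dot, rot]; ring
  rw [hκ, ← eq_smul_rot_of_dot_eq_zero (hunit u) horth]
  exact hT

theorem exists_angle_of_unit_speed (hγ : ContDiff ℝ 2 γ)
    (hunit : ∀ s, dot (deriv γ s) (deriv γ s) = 1) :
    ∃ θ : ℝ → ℝ, (∀ u, HasDerivAt θ (curvature γ u) u) ∧ ∀ u, HasDerivAt γ (dir (θ u)) u := by
  have hT := (hγ.deriv' (n := 1)).continuous
  have hT' := (hγ.deriv' (n := 1)).continuous_deriv le_rfl
  obtain ⟨θ, hθ, hγθ⟩ := exists_angle_of_hasDerivAt (by unfold curvature; fun_prop)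
    (hasDerivAt_deriv_of_unit_speed hγ hunit) (hunit 0)
  refine ⟨θ, hθ, fun u => ?_⟩
  rw [← hγθ]
  exact (hγ.differentiable two_ne_zero u).hasDerivAt

end Angle

section Periodic

theorem _root_.Function.Periodic.deriv {𝕜 F : Type*} [NontriviallyNormedField 𝕜]
    [NormedAddCommGroup F] [NormedSpace 𝕜 F] {f : 𝕜 → F} {c : 𝕜} (h : Periodic f c) :
    Periodic (deriv f) c := fun x => by
  rw [← deriv_comp_add_const, show (fun y => f (y + c)) = f from funext h]

lemma periodic_curvature {γ : ℝ → ℝ × ℝ} {L : ℝ} (h : Periodic γ L) :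
    Periodic (curvature γ) L := fun s => by
  simp only [curvature, h.deriv s, h.deriv.deriv s]

lemma add_period_eq_of_hasDerivAt {θ κ : ℝ → ℝ} {L : ℝ} (hθ : ∀ u, HasDerivAt θ (κ u) u)
    (hκ : Periodic κ L) (u : ℝ) : θ (u + L) = θ u + (θ L - θ 0) := by
  have h : ∀ u, HasDerivAt (fun y => θ (y + L) - θ y) 0 u := fun u =>
    (((hθ (u + L)).comp_add_const u L).sub (hθ u)).congr_deriv (by rw [hκ, sub_self])
  have := is_const_of_deriv_eq_zero (fun u => (h u).differentiableAt) (fun u => (h u).deriv) u 0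
  simp only [zero_add] at this
  linarith

theorem surjective_of_add_period {f : ℝ → ℝ} {L C : ℝ} (hf : Continuous f)
    (hper : ∀ x, f (x + L) = f x + C) (hC : C ≠ 0) : Surjective f := by
  have hmul : ∀ n : ℕ, f (n * L) = f 0 + n * C ∧ f (-(n * L)) = f 0 - n * C := by
    intro n
    induction n with
    | zero => simp
    | succ n ih =>
      have h1 := hper (n * L)
      have h2 := hper (-((n + 1) * L))
      rw [show -((n + 1) * L) + L = -(n * L) by ring, ih.2] at h2
      push_cast
      constructor
      · rw [add_mul, one_mul, h1, ih.1]; ring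
      · linarith
  intro y
  obtain ⟨n, hn⟩ := exists_nat_ge (|y - f 0| / |C|)
  have hy := abs_le.mp ((div_le_iff₀ (abs_pos.mpr hC)).mp hn)
  obtain ⟨x, -, hx⟩ := intermediate_value_uIcc hf.continuousOn <|
      show y ∈ uIcc (f (n * L)) (f (-(n * L))) by
    rw [(hmul n).1, (hmul n).2, mem_uIcc]
    rcases le_or_gt 0 C with h | h
    · rw [abs_of_nonneg h] at hy; right; constructor <;> linarith
    · rw [abs_of_neg h] at hy; left; constructor <;> linarith
  exact ⟨x, hx⟩

theorem surjective_of_hasDerivAt_pos_of_periodic {θ κ : ℝ → ℝ} {L : ℝ}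
    (hθ : ∀ u, HasDerivAt θ (κ u) u) (hκ : ∀ u, 0 < κ u) (hper : Periodic κ L) (hL : 0 < L) :
    Surjective θ :=
  surjective_of_add_period (continuous_iff_continuousAt.mpr fun u => (hθ u).continuousAt)
    (add_period_eq_of_hasDerivAt hθ hper)
    (sub_pos.mpr (strictMono_of_hasDerivAt_pos hθ hκ hL)).ne'

end Periodic

section Convex

lemma eq_of_countable_segment {E : Type*} [AddCommGroup E] [Module ℝ E] {p q : E}
    (h : (segment ℝ p q).Countable) : p = q := by
  by_contra hpq
  rw [segment_eq_image_lineMap] at h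
  have hIcc := h.preimage (AffineMap.lineMap_injective ℝ hpq)
  rw [preimage_image_eq _ (AffineMap.lineMap_injective ℝ hpq),
    Cardinal.Real.Icc_countable_iff] at hIcc
  exact absurd hIcc (by norm_num)

lemma exists_dual_le_of_notMem_interior {E : Type*} [TopologicalSpace E] [AddCommGroup E]
    [Module ℝ E] [IsTopologicalAddGroup E] [ContinuousSMul ℝ E] {K : Set E} (hK : Convex ℝ K)
    (hint : (interior K).Nonempty) {p : E} (hp : p ∉ interior K) :
    ∃ f : StrongDual ℝ E, f ≠ 0 ∧ ∀ y ∈ K, f y ≤ f p := by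
  obtain ⟨f, hf⟩ := geometric_hahn_banach_open_point hK.interior isOpen_interior hp
  obtain ⟨x₀, hx₀⟩ := hint
  refine ⟨f, fun h => by simpa [h] using hf x₀ hx₀, fun y hy => ?_⟩
  have hcl : closure (interior K) ⊆ {y | f y ≤ f p} :=
    closure_minimal (fun y hy => (hf y hy).le) (isClosed_le f.continuous continuous_const)
  exact hcl <| (hK.closure_interior_eq_closure_of_nonempty_interior ⟨x₀, hx₀⟩).symm ▸
    subset_closure hy

variable {K : Set (ℝ × ℝ)}

lemma exists_dot_le_of_notMem_interior (hK : Convex ℝ K) (hint : (interior K).Nonempty)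
    {p : ℝ × ℝ} (hp : p ∉ interior K) : ∃ v ≠ 0, ∀ y ∈ K, dot y v ≤ dot p v := by
  obtain ⟨f, hf0, hf⟩ := exists_dual_le_of_notMem_interior hK hint hp
  have hfv : ∀ y, f y = dot y (f (1, 0), f (0, 1)) := fun y => by
    conv_lhs => rw [show y = y.1 • ((1 : ℝ), (0 : ℝ)) + y.2 • ((0 : ℝ), (1 : ℝ)) by ext <;> simp]
    rw [map_add, map_smul, map_smul, dot, smul_eq_mul, smul_eq_mul]
  refine ⟨(f (1, 0), f (0, 1)), fun h => hf0 (ContinuousLinearMap.ext fun y => ?_),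
    fun y hy => hfv y ▸ hfv p ▸ hf y hy⟩
  rw [hfv, h]; simp [dot]

lemma dot_sub_pos_of_mem_interior {p n x : ℝ × ℝ} (hn : n ≠ 0)
    (hK : ∀ y ∈ K, 0 ≤ dot (y - p) n) (hx : x ∈ interior K) : 0 < dot (x - p) n := by
  have hcont : Continuous fun ε : ℝ => x - ε • n := by fun_prop
  have hlim : Tendsto (fun ε : ℝ => x - ε • n) (𝓝 0) (𝓝 x) := hcont.tendsto' 0 x (by simp)
  obtain ⟨ε, hε, hεK⟩ := (hlim.eventually (mem_interior_iff_mem_nhds.mp hx)).exists_gt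
  have h := hK _ hεK
  rw [sub_right_comm, dot_sub_left, dot_smul_left] at h
  nlinarith [dot_self_pos hn]

end Convex

section Support

variable {K : Set (ℝ × ℝ)} {γ : ℝ → ℝ × ℝ} {θ : ℝ → ℝ}

theorem exists_neg_smul_rot_of_forall_dot_le (hγ : ∀ u, HasDerivAt γ (dir (θ u)) u)
    (hθc : Continuous θ) (hθ : StrictMono θ) {v : ℝ × ℝ} {a : ℝ} (hv : v ≠ 0)
    (hmax : ∀ u, dot (γ u) v ≤ dot (γ a) v) : ∃ c : ℝ, c < 0 ∧ v = c • rot (dir (θ a)) := by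
  have hg : ∀ u, HasDerivAt (fun y => dot (γ y) v) (dot (dir (θ u)) v) u := fun u =>
    hasDerivAt_dot_const (hγ u) v
  have h0 : dot v (dir (θ a)) = 0 := by
    rw [dot_comm]; exact IsLocalMax.hasDerivAt_eq_zero (Eventually.of_forall hmax) (hg a)
  set c := dot v (rot (dir (θ a)))
  have hvc : v = c • rot (dir (θ a)) := eq_smul_rot_of_dot_eq_zero (dot_dir_self _) h0
  refine ⟨c, lt_of_le_of_ne (not_lt.mp fun hc => ?_) fun hc => hv (by rw [hvc, hc, zero_smul]),
    hvc⟩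
  -- for `c > 0` the curve would cross the line `dot · v = dot (γ a) v` just after `a`
  obtain ⟨b, hab, hb⟩ :=
    ((hθc.tendsto a).eventually (gt_mem_nhds (lt_add_of_pos_right (θ a) pi_pos))).exists_gt
  have hinc : StrictMonoOn (fun y => dot (γ y) v) (Icc a b) := by
    refine strictMonoOn_of_deriv_pos (convex_Icc a b)
      (fun u _ => (hg u).continuousAt.continuousWithinAt) fun u hu => ?_
    rw [interior_Icc] at hu
    rw [(hg u).deriv, hvc, dot_smul_right, dot_dir_rot_dir]
    exact mul_pos hc (sin_pos_of_pos_of_lt_pi (sub_pos.mpr (hθ hu.1)) (by linarith [hθ hu.2]))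
  linarith [hmax b, hinc (left_mem_Icc.mpr hab.le) (right_mem_Icc.mpr hab.le) hab]

theorem dot_sub_rot_dir_nonneg (hK : Convex ℝ K) (hint : (interior K).Nonempty)
    (hγ : ∀ u, HasDerivAt γ (dir (θ u)) u) (hθc : Continuous θ) (hθ : StrictMono θ)
    (hγK : ∀ u, γ u ∈ K) (hγint : ∀ u, γ u ∉ interior K) (a : ℝ) :
    ∀ x ∈ K, 0 ≤ dot (x - γ a) (rot (dir (θ a))) := by
  obtain ⟨v, hv, hvK⟩ := exists_dot_le_of_notMem_interior hK hint (hγint a)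
  obtain ⟨c, hc, rfl⟩ := exists_neg_smul_rot_of_forall_dot_le hγ hθc hθ hv fun u => hvK _ (hγK u)
  intro x hx
  have h := hvK x hx
  rw [dot_smul_right, dot_smul_right, mul_le_mul_left_of_neg hc] at h
  rw [dot_sub_left]
  linarith

theorem eq_of_dir_eq (hK : Convex ℝ K) (hγ : ∀ u, HasDerivAt γ (dir (θ u)) u)
    (hθ : Injective θ) (hγK : ∀ u, γ u ∈ K) (hfr : frontier K ⊆ range γ)
    (hsupp : ∀ a, ∀ x ∈ K, 0 ≤ dot (x - γ a) (rot (dir (θ a)))) {s u : ℝ}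
    (hsu : dir (θ u) = dir (θ s)) : γ u = γ s := by
  set n := rot (dir (θ s))
  have hn : n ≠ 0 := fun h => by simpa [n, h, dot] using dot_rot_dir_self (θ s)
  set H := {x | dot x n = dot (γ s) n}
  -- a point of `K` on the support line at `γ s` is a minimum of `dot (γ ·) n` on the curve,
  -- so the tangent there is `± dir (θ s)`
  have hKH : (K ∩ H).Countable := by
    refine (((countable_range fun k : ℤ => θ s + k * π).preimage hθ).image γ).mono ?_
    rintro x ⟨hxK, hxH : dot x n = dot (γ s) n⟩
    have hxfr : x ∈ frontier K := ⟨subset_closure hxK, fun hxi =>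
      (dot_sub_pos_of_mem_interior hn (hsupp s) hxi).ne' (by rw [dot_sub_left, hxH, sub_self])⟩
    obtain ⟨τ, rfl⟩ := hfr hxfr
    have hmin : IsLocalMin (fun y => dot (γ y) n) τ := Eventually.of_forall fun y => by
      have := hsupp s (γ y) (hγK y)
      rw [dot_sub_left] at this
      show dot (γ τ) n ≤ dot (γ y) n
      linarith
    have h0 := hmin.hasDerivAt_eq_zero (hasDerivAt_dot_const (hγ τ) n)
    rw [dot_dir_rot_dir] at h0
    obtain ⟨k, hk⟩ := sin_eq_zero_iff.mp h0
    exact ⟨τ, ⟨k, by linarith⟩, rfl⟩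
  have hγu : γ u ∈ H := by
    have h1 := hsupp s (γ u) (hγK u)
    have h2 := hsupp u (γ s) (hγK s)
    rw [hsu, dot_sub_left] at h2
    rw [dot_sub_left] at h1
    show dot (γ u) n = dot (γ s) n
    linarith
  exact eq_of_countable_segment <| hKH.mono <|
    (hK.inter (convex_hyperplane (isLinearMap_dot_left n) _)).segment_subset ⟨hγK u, hγu⟩
      ⟨hγK s, rfl⟩

end Support

section Rolling

variable {γ : ℝ → ℝ × ℝ} {θ κ : ℝ → ℝ} {ρ : ℝ}

theorem le_dot_sub_of_mul_curvature_le (hγ : ∀ u, HasDerivAt γ (dir (θ u)) u)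
    (hθ : ∀ u, HasDerivAt θ (κ u) u) {φ x y : ℝ} (hxy : x ≤ y)
    (hρκ : ∀ u ∈ Icc x y, ρ * κ u ≤ 1) (hsin : ∀ u ∈ Icc x y, 0 ≤ sin (θ u - φ)) :
    ρ * (cos (θ x - φ) - cos (θ y - φ)) ≤ dot (γ y - γ x) (rot (dir φ)) := by
  set h := fun u => dot (γ u) (rot (dir φ)) + ρ * cos (θ u - φ)
  have hh : ∀ u, HasDerivAt h ((1 - ρ * κ u) * sin (θ u - φ)) u := fun u =>
    ((hasDerivAt_dot_const (hγ u) _).add (((hθ u).sub_const φ).cos.const_mul ρ)).congr_deriv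
      (by rw [dot_dir_rot_dir]; ring)
  have hmono : MonotoneOn h (Icc x y) :=
    monotoneOn_of_deriv_nonneg (convex_Icc x y) (fun u _ => (hh u).continuousAt.continuousWithinAt)
      (fun u _ => (hh u).differentiableAt.differentiableWithinAt) fun u hu => by
        rw [(hh u).deriv]
        exact mul_nonneg (sub_nonneg.mpr (hρκ u (interior_subset hu))) (hsin u (interior_subset hu))
  have := hmono (left_mem_Icc.mpr hxy) (right_mem_Icc.mpr hxy) hxy
  simp only [h] at this
  rw [dot_sub_left]
  linarith

theorem le_dot_sub_center_of_le_add_pi (hγ : ∀ u, HasDerivAt γ (dir (θ u)) u)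
    (hθ : ∀ u, HasDerivAt θ (κ u) u) (hθm : Monotone θ) (hρκ : ∀ u, ρ * κ u ≤ 1) {a t : ℝ}
    (hat : a ≤ t) (hπ : θ t ≤ θ a + π) :
    ρ ≤ dot (γ t - (γ a + ρ • rot (dir (θ a)))) (rot (dir (θ t - π))) := by
  have h := le_dot_sub_of_mul_curvature_le hγ hθ (φ := θ t - π) hat (fun u _ => hρκ u)
    fun u hu => sin_nonneg_of_nonneg_of_le_pi (by linarith [hθm hu.1]) (by linarith [hθm hu.2])
  rw [sub_sub_cancel, cos_pi] at h
  rw [← sub_sub, dot_sub_left, dot_smul_left, dot_rot_dir_rot_dir]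
  linarith

theorem dot_sub_center_le_neg_of_le_add_pi (hγ : ∀ u, HasDerivAt γ (dir (θ u)) u)
    (hθ : ∀ u, HasDerivAt θ (κ u) u) (hθm : Monotone θ) (hρκ : ∀ u, ρ * κ u ≤ 1) {t b : ℝ}
    (htb : t ≤ b) (hπ : θ b ≤ θ t + π) :
    dot (γ t - (γ b + ρ • rot (dir (θ b)))) (rot (dir (θ t))) ≤ -ρ := by
  have h := le_dot_sub_of_mul_curvature_le hγ hθ (φ := θ t) htb (fun u _ => hρκ u)
    fun u hu => sin_nonneg_of_nonneg_of_le_pi (by linarith [hθm hu.1]) (by linarith [hθm hu.2])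
  rw [sub_self, cos_zero, dot_sub_left] at h
  rw [← sub_sub, dot_sub_left, dot_smul_left, dot_rot_dir_rot_dir, dot_sub_left]
  linarith

theorem sq_le_dot_self_sub_center (hγ : ∀ u, HasDerivAt γ (dir (θ u)) u)
    (hθ : ∀ u, HasDerivAt θ (κ u) u) (hθm : StrictMono θ) (hsurj : Surjective θ) (hρ : 0 ≤ ρ)
    (hρκ : ∀ u, ρ * κ u ≤ 1) {s : ℝ} (hsame : ∀ u, dir (θ u) = dir (θ s) → γ u = γ s)
    (t : ℝ) :
    ρ ^ 2 ≤ dot (γ t - (γ s + ρ • rot (dir (θ s)))) (γ t - (γ s + ρ • rot (dir (θ s)))) := by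
  obtain ⟨k, hk₁, hk₂⟩ := (existsUnique_zsmul_near_of_pos two_pi_pos (θ t - θ s)).exists
  rw [zsmul_eq_mul] at hk₁
  rw [zsmul_eq_mul, Int.cast_add, Int.cast_one] at hk₂
  have hsame' : ∀ u (m : ℤ), θ u = θ s + m * (2 * π) → γ u = γ s ∧ dir (θ u) = dir (θ s) :=
    fun u m hm => have hd := hm ▸ dir_add_int_mul_two_pi (θ s) m; ⟨hsame u hd, hd⟩
  obtain ⟨a, ha⟩ := hsurj (θ s + k * (2 * π))
  obtain ⟨b, hb⟩ := hsurj (θ s + (k + 1 : ℤ) * (2 * π))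
  obtain ⟨hγa, hda⟩ := hsame' a k ha
  obtain ⟨hγb, hdb⟩ := hsame' b (k + 1) hb
  push_cast at hb
  rcases le_or_gt (θ t) (θ a + π) with hπ | hπ
  · have h := le_dot_sub_center_of_le_add_pi hγ hθ hθm.monotone hρκ
      (hθm.le_iff_le.mp (by linarith)) hπ
    rw [hγa, hda] at h
    exact (pow_le_pow_left₀ hρ h 2).trans (sq_dot_le_dot_self (dot_rot_dir_self _))
  · have h := dot_sub_center_le_neg_of_le_add_pi hγ hθ hθm.monotone hρκ (t := t) (b := b)
      (hθm.le_iff_le.mp (by linarith)) (by linarith)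
    rw [hγb, hdb] at h
    exact (pow_le_pow_left₀ hρ (le_neg.mpr h) 2).trans
      ((neg_sq _).le.trans (sq_dot_le_dot_self (dot_rot_dir_self _)))

theorem sq_le_dot_self_sub_center_of_convex {K : Set (ℝ × ℝ)} (hK : Convex ℝ K)
    (hKc : IsClosed K) (hint : (interior K).Nonempty) (hrange : range γ = frontier K)
    (hγ : ∀ u, HasDerivAt γ (dir (θ u)) u) (hθ : ∀ u, HasDerivAt θ (κ u) u)
    (hκ : ∀ u, 0 < κ u) (hsurj : Surjective θ) (hρ : 0 ≤ ρ) (hρκ : ∀ u, ρ * κ u ≤ 1)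
    (s t : ℝ) :
    ρ ^ 2 ≤ dot (γ t - (γ s + ρ • rot (dir (θ s)))) (γ t - (γ s + ρ • rot (dir (θ s)))) := by
  have hθm := strictMono_of_hasDerivAt_pos hθ hκ
  have hθc : Continuous θ := continuous_iff_continuousAt.mpr fun u => (hθ u).continuousAt
  have hγfr : ∀ u, γ u ∈ frontier K := fun u => hrange ▸ mem_range_self u
  have hγK : ∀ u, γ u ∈ K := fun u => hKc.frontier_subset (hγfr u)
  have hsupp := dot_sub_rot_dir_nonneg hK hint hγ hθc hθm hγK fun u => (hγfr u).2
  exact sq_le_dot_self_sub_center hγ hθ hθm hsurj hρ hρκ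
    (fun u => eq_of_dir_eq hK hγ hθm.injective hγK hrange.ge hsupp) t

end Rolling

end Plane

end

open Plane

/-- **Inner Blaschke rolling estimate.**
Let `γ : ℝ → ℝ²` be a `C²`, `L`-periodic, unit-speed curve parametrizing (with
positive orientation, which is forced by the positivity of the signed curvature)
the boundary of a compact convex body `K ⊂ ℝ²`, with signed curvature
`κ(s) = X'(s)Y''(s) − X''(s)Y'(s)` satisfying `0 < κ(s) ≤ 1/ρmin`.  Then for
every `s`, the curve does not enter the open disc of radius `ρmin` internally
tangent at `γ(s)`: `|γ(t) − (γ(s) + ρmin • N(s))| ≥ ρmin` for all `t`, where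
`N(s) = (−Y'(s), X'(s))` is the inward unit normal. -/
theorem inner_blaschke_rolling
    (γ : ℝ → ℝ × ℝ) (L ρmin : ℝ) (K : Set (ℝ × ℝ))
    (hK_compact : IsCompact K) (hK_convex : Convex ℝ K)
    (hK_body : (interior K).Nonempty)
    (hγ_range : Set.range γ = frontier K)
    (hγ_smooth : ContDiff ℝ 2 γ)
    (hL : 0 < L) (hγ_per : Function.Periodic γ L)
    (hγ_unit : ∀ s : ℝ, (deriv γ s).1 ^ 2 + (deriv γ s).2 ^ 2 = 1)
    (hρmin : 0 < ρmin)
    (hκ_pos : ∀ s : ℝ,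
      0 < (deriv γ s).1 * (deriv (deriv γ) s).2
          - (deriv (deriv γ) s).1 * (deriv γ s).2)
    (hκ_upper : ∀ s : ℝ,
      (deriv γ s).1 * (deriv (deriv γ) s).2
          - (deriv (deriv γ) s).1 * (deriv γ s).2 ≤ 1 / ρmin) :
    ∀ s t : ℝ,
      ρmin ^ 2 ≤ ((γ t).1 - ((γ s).1 - ρmin * (deriv γ s).2)) ^ 2 +
        ((γ t).2 - ((γ s).2 + ρmin * (deriv γ s).1)) ^ 2 := by
  have hunit : ∀ s, dot (deriv γ s) (deriv γ s) = 1 := fun s => by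
    simpa only [dot, sq] using hγ_unit s
  have hρκ : ∀ u, ρmin * curvature γ u ≤ 1 := fun u => by
    rw [mul_comm]; exact (le_div_iff₀ hρmin).mp (hκ_upper u)
  obtain ⟨θ, hθ, hγθ⟩ := exists_angle_of_unit_speed hγ_smooth hunit
  have hsurj := surjective_of_hasDerivAt_pos_of_periodic hθ hκ_pos (periodic_curvature hγ_per) hL
  intro s t
  have h := sq_le_dot_self_sub_center_of_convex hK_convex hK_compact.isClosed hK_body hγ_range
    hγθ hθ hκ_pos hsurj hρmin.le hρκ s t
  rw [← (hγθ s).deriv] at h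
  convert h using 1
  simp only [dot, rot, Prod.fst_sub, Prod.snd_sub, Prod.fst_add, Prod.snd_add, Prod.smul_fst,
    Prod.smul_snd, smul_eq_mul]
  ring
end
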